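/- arXiv:1804.05500 — 5 statements merged into one kernel-verified Lean document; each statement's English description precedes it below -/
import Mathlib

section
/- For a simple connected graph G on n vertices with diameter D, the spectral gap λ₁ of the normalized Laplacian satisfies λ₁ ≥ 4/(D·vol(G)), where vol(G) is the sum of all vertex degrees. -/
open Finset
open scoped Classical

noncomputable section

variable {V : Type*}

/-- Dirichlet energy `∑_{u~v} (f u - f v)^2` (each edge counted once). -/
def SimpleGraph.energyForm [Fintype V] (G : SimpleGraph V) (f : V → ℝ) : ℝ :=
  (1/2) * ∑ x : V, ∑ y : V, if G.Adj x y then (f x - f y)^2 else 0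

/-- The weighted norm `∑_x f(x)^2 d(x)`. -/
def SimpleGraph.qForm [Fintype V] (G : SimpleGraph V) (f : V → ℝ) : ℝ :=
  ∑ x : V, (f x)^2 * (G.degree x : ℝ)

/-- The spectral gap of the normalized Laplacian, via the variational characterization
`λ₁ = inf { R(f) : ∑ f(u) d(u) = 0, f ≢ 0 }`. -/
def SimpleGraph.lambda1 [Fintype V] (G : SimpleGraph V) : ℝ :=
  sInf { r | ∃ f : V → ℝ, (∑ x : V, f x * (G.degree x : ℝ)) = 0 ∧ G.qForm f ≠ 0 ∧
    r = G.energyForm f / G.qForm f }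

/-! ### Auxiliary lemmas -/

lemma aux_sum_darts_eq [Fintype V] (G : SimpleGraph V) (f : V → ℝ) :
    ∑ d : G.Dart, (f d.fst - f d.snd)^2 = 2 * G.energyForm f := by
  classical
  let e : G.Dart ≃ {p : V × V // G.Adj p.1 p.2} :=
    ⟨fun d => ⟨d.toProd, d.adj⟩, fun p => ⟨p.1, p.2⟩,
      fun d => by cases d; rfl, fun p => by cases p; rfl⟩
  rw [SimpleGraph.energyForm]
  have h1 : ∑ d : G.Dart, (f d.fst - f d.snd)^2
      = ∑ p : {p : V × V // G.Adj p.1 p.2}, (f p.1.1 - f p.1.2)^2 :=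
    Fintype.sum_equiv e _ _ (fun d => rfl)
  rw [h1]
  rw [← Finset.sum_subtype (univ.filter (fun p : V × V => G.Adj p.1 p.2))
    (by intro p; simp) (fun p => (f p.1 - f p.2)^2)]
  rw [Finset.sum_filter, Fintype.sum_prod_type]
  ring

lemma aux_energy_nonneg [Fintype V] (G : SimpleGraph V) (f : V → ℝ) :
    0 ≤ G.energyForm f := by
  rw [SimpleGraph.energyForm]
  have : ∀ x ∈ (univ : Finset V), (0:ℝ) ≤ ∑ y : V, if G.Adj x y then (f x - f y)^2 else 0 := by
    intro x _
    refine Finset.sum_nonneg fun y _ => ?_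
    split <;> positivity
  positivity

lemma aux_path_energy [Fintype V] (G : SimpleGraph V) (f : V → ℝ) {a b : V}
    (p : G.Walk a b) (hp : p.IsPath) :
    (p.darts.map (fun d => (f d.fst - f d.snd)^2)).sum ≤ G.energyForm f := by
  classical
  set w : G.Dart → ℝ := fun d => (f d.fst - f d.snd)^2 with hw
  have hd : p.darts.Nodup := SimpleGraph.Walk.darts_nodup_of_support_nodup hp.support_nodup
  have hinj : Function.Injective (SimpleGraph.Dart.symm : G.Dart → G.Dart) :=
    SimpleGraph.Dart.symm_involutive.injective
  have hds : (p.darts.map SimpleGraph.Dart.symm).Nodup := hd.map hinj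
  have hedges : (p.darts.map SimpleGraph.Dart.edge).Nodup := hp.edges_nodup
  have hdisj : p.darts.Disjoint (p.darts.map SimpleGraph.Dart.symm) := by
    intro d hd1 hd2
    obtain ⟨e, he, rfl⟩ := List.mem_map.mp hd2
    have : e.symm.edge = e.edge := SimpleGraph.Dart.edge_symm e
    have heq : e.symm = e := List.inj_on_of_nodup_map hedges hd1 he this
    exact e.symm_ne heq
  have hnodup : (p.darts ++ p.darts.map SimpleGraph.Dart.symm).Nodup :=
    List.Nodup.append hd hds hdisj
  set l := p.darts ++ p.darts.map SimpleGraph.Dart.symm with hl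
  have hsum : (l.map w).sum = 2 * (p.darts.map w).sum := by
    rw [hl, List.map_append, List.sum_append, List.map_map]
    have : w ∘ SimpleGraph.Dart.symm = w := by
      funext d
      simp only [Function.comp, hw, SimpleGraph.Dart.symm, Prod.fst_swap, Prod.snd_swap]
      ring
    rw [this]; ring
  have hsub : (l.map w).sum ≤ ∑ d : G.Dart, w d := by
    rw [← List.sum_toFinset w hnodup]
    refine Finset.sum_le_sum_of_subset_of_nonneg (Finset.subset_univ _) ?_
    intro d _ _
    positivity
  have := aux_sum_darts_eq G f
  rw [hw] at hsub ⊢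
  simp only at hsub
  nlinarith [hsub, hsum, this]

lemma aux_telescope {V : Type*} {G : SimpleGraph V} (f : V → ℝ) :
    ∀ {a b : V} (p : G.Walk a b),
      (p.darts.map (fun d => f d.fst - f d.snd)).sum = f a - f b := by
  intro a b p
  induction p with
  | nil => simp
  | cons h q ih => simp [ih]

lemma aux_list_cs_aux {n : ℕ} (g : Fin n → ℝ) :
    (List.ofFn g).sum ^ 2 ≤ ((List.ofFn g).length : ℝ) * ((List.ofFn g).map (· ^ 2)).sum := by
  simp only [List.sum_ofFn, List.map_ofFn, List.length_ofFn, Function.comp]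
  calc (∑ i, g i)^2 = (∑ i : Fin n, 1 * g i)^2 := by simp
    _ ≤ (∑ _i : Fin n, (1:ℝ)^2) * ∑ i, (g i)^2 :=
        Finset.sum_mul_sq_le_sq_mul_sq _ _ _
    _ = n * ∑ i, (g i)^2 := by simp

lemma aux_list_cs (l : List ℝ) : l.sum ^ 2 ≤ (l.length : ℝ) * (l.map (· ^ 2)).sum := by
  have := aux_list_cs_aux l.get
  rwa [List.ofFn_get] at this

lemma aux_deg_pos {n : ℕ} (G : SimpleGraph (Fin n)) (hG : G.Connected) (hn : 2 ≤ n)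
    (v : Fin n) : 0 < G.degree v := by
  haveI : Nontrivial (Fin n) := ⟨⟨⟨0, by omega⟩, ⟨1, by omega⟩, by simp [Fin.ext_iff]⟩⟩
  rw [G.degree_pos_iff_exists_adj]
  obtain ⟨u, hu⟩ := exists_ne v
  obtain ⟨p⟩ := hG.preconnected v u
  cases p with
  | nil => exact absurd rfl hu
  | cons h q => exact ⟨_, h⟩

lemma aux_rayleigh_lower {n : ℕ} (G : SimpleGraph (Fin n)) (hG : G.Connected) (hn : 2 ≤ n)
    (f : Fin n → ℝ) (hmean : (∑ x : Fin n, f x * (G.degree x : ℝ)) = 0)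
    (hQ : G.qForm f ≠ 0) :
    4 / ((G.diam : ℝ) * ∑ x : Fin n, (G.degree x : ℝ)) ≤ G.energyForm f / G.qForm f := by
  classical
  haveI : Nontrivial (Fin n) := ⟨⟨⟨0, by omega⟩, ⟨1, by omega⟩, by simp [Fin.ext_iff]⟩⟩
  have hdeg : ∀ v : Fin n, (0:ℝ) < (G.degree v : ℝ) := fun v => by
    exact_mod_cast aux_deg_pos G hG hn v
  have hvol : (0:ℝ) < ∑ x : Fin n, (G.degree x : ℝ) :=
    Finset.sum_pos (fun x _ => hdeg x) univ_nonempty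
  have hQnn : 0 ≤ G.qForm f :=
    Finset.sum_nonneg fun x _ => mul_nonneg (sq_nonneg _) (hdeg x).le
  have hQpos : 0 < G.qForm f := lt_of_le_of_ne hQnn (Ne.symm hQ)
  have hediam : G.ediam ≠ ⊤ := by
    obtain ⟨u, v, huv⟩ := G.exists_edist_eq_ediam_of_finite
    rw [← huv]
    exact SimpleGraph.edist_ne_top_iff_reachable.mpr (hG.preconnected u v)
  have hdiam0 : G.diam ≠ 0 := fun h =>
    (SimpleGraph.diam_eq_zero.mp h).elim hediam (not_subsingleton (Fin n))
  have hdiampos : (0:ℝ) < (G.diam : ℝ) := by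
    exact_mod_cast Nat.pos_of_ne_zero hdiam0
  obtain ⟨xM, -, hM⟩ := Finset.exists_max_image (univ : Finset (Fin n)) f univ_nonempty
  obtain ⟨xm, -, hm⟩ := Finset.exists_min_image (univ : Finset (Fin n)) f univ_nonempty
  set M := f xM with hMdef
  set m := f xm with hmdef
  set c : ℝ := (M + m) / 2 with hc
  -- Q bound : 4 Q ≤ (M-m)^2 * vol
  have expand : ∑ x : Fin n, (f x - c)^2 * (G.degree x:ℝ)
      = G.qForm f + c^2 * (∑ x : Fin n, (G.degree x:ℝ))
        - 2*c*(∑ x : Fin n, f x * (G.degree x:ℝ)) := by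
    rw [SimpleGraph.qForm, Finset.mul_sum, Finset.mul_sum, ← Finset.sum_add_distrib,
      ← Finset.sum_sub_distrib]
    exact Finset.sum_congr rfl fun x _ => by ring
  rw [hmean] at expand
  have hbound : ∑ x : Fin n, (f x - c)^2 * (G.degree x:ℝ)
      ≤ ((M - m)/2)^2 * ∑ x : Fin n, (G.degree x:ℝ) := by
    rw [Finset.mul_sum]
    refine Finset.sum_le_sum fun x _ => ?_
    refine mul_le_mul_of_nonneg_right ?_ (hdeg x).le
    have h1 := hM x (mem_univ x)
    have h2 := hm x (mem_univ x)
    nlinarith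
  have hQ4 : 4 * G.qForm f ≤ (M - m)^2 * ∑ x : Fin n, (G.degree x:ℝ) := by
    have hc2 : 0 ≤ c^2 * (∑ x : Fin n, (G.degree x:ℝ)) := by positivity
    nlinarith [expand, hbound]
  -- energy bound : (M-m)^2 ≤ diam * energy
  have hE : (M - m)^2 ≤ (G.diam:ℝ) * G.energyForm f := by
    obtain ⟨p, hp⟩ := hG.exists_walk_length_eq_dist xM xm
    set q := p.bypass with hqdef
    have hqpath : q.IsPath := p.bypass_isPath
    have hqlen : q.length ≤ G.diam := by
      calc q.length ≤ p.length := SimpleGraph.Walk.length_bypass_le p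
        _ = G.dist xM xm := hp
        _ ≤ G.diam := SimpleGraph.dist_le_diam hediam
    have tele := aux_telescope f q
    have cs := aux_list_cs (q.darts.map (fun d => f d.fst - f d.snd))
    rw [tele] at cs
    have hmapmap : ((q.darts.map (fun d => f d.fst - f d.snd)).map (· ^ 2)).sum
        = (q.darts.map (fun d => (f d.fst - f d.snd)^2)).sum := by
      rw [List.map_map]; rfl
    have hlen : ((q.darts.map (fun d => f d.fst - f d.snd)).length : ℝ) = (q.length : ℝ) := by
      rw [List.length_map, SimpleGraph.Walk.length_darts]
    rw [hmapmap, hlen] at cs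
    have hpe := aux_path_energy G f q hqpath
    have hSnn : 0 ≤ (q.darts.map (fun d => (f d.fst - f d.snd)^2)).sum := by
      refine List.sum_nonneg fun x hx => ?_
      obtain ⟨d, -, rfl⟩ := List.mem_map.mp hx
      positivity
    have hlcast : (q.length : ℝ) ≤ (G.diam : ℝ) := by exact_mod_cast hqlen
    calc (M - m)^2 ≤ (q.length : ℝ) * (q.darts.map (fun d => (f d.fst - f d.snd)^2)).sum := cs
      _ ≤ (G.diam : ℝ) * (q.darts.map (fun d => (f d.fst - f d.snd)^2)).sum :=
          mul_le_mul_of_nonneg_right hlcast hSnn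
      _ ≤ (G.diam : ℝ) * G.energyForm f := mul_le_mul_of_nonneg_left hpe hdiampos.le
  rw [div_le_div_iff₀ (by positivity) hQpos]
  nlinarith [mul_le_mul_of_nonneg_right hE hvol.le, hQ4]

/-- For a simple connected graph `G` on `n` vertices with diameter `D`,
`λ₁ ≥ 4 / (D · vol G)`. -/
theorem lambda1_ge_four_div_diam_mul_vol {n : ℕ} (G : SimpleGraph (Fin n))
    (hG : G.Connected) :
    G.lambda1 ≥ 4 / ((G.diam : ℝ) * ∑ x : Fin n, (G.degree x : ℝ)) := by
  classical
  rcases lt_or_ge n 2 with hn | hn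
  · -- degenerate cases n = 0, 1
    have h01 : n = 0 ∨ n = 1 := by omega
    rcases h01 with rfl | rfl
    · obtain ⟨v⟩ := hG.nonempty
      exact v.elim0
    · have hdeg : ∀ x : Fin 1, G.degree x = 0 := by
        intro x
        have hnone : ∀ y, ¬ G.Adj x y := fun y h => G.irrefl (Subsingleton.elim x y ▸ h)
        rw [← SimpleGraph.card_neighborFinset_eq_degree, Finset.card_eq_zero,
          Finset.eq_empty_iff_forall_notMem]
        intro y hy
        exact hnone y ((SimpleGraph.mem_neighborFinset _ _ _).mp hy)
      have hvol : (∑ x : Fin 1, (G.degree x : ℝ)) = 0 := by simp [hdeg]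
      have hset : { r | ∃ f : Fin 1 → ℝ, (∑ x : Fin 1, f x * (G.degree x : ℝ)) = 0 ∧
          G.qForm f ≠ 0 ∧ r = G.energyForm f / G.qForm f } = (∅ : Set ℝ) := by
        ext r
        simp only [Set.mem_setOf_eq, Set.mem_empty_iff_false, iff_false, not_exists]
        rintro f ⟨-, hQ, -⟩
        exact hQ (by simp [SimpleGraph.qForm, hdeg])
      rw [SimpleGraph.lambda1, hset, Real.sInf_empty, hvol, mul_zero, div_zero]
  · -- main case n ≥ 2
    have hdeg : ∀ v : Fin n, (0:ℝ) < (G.degree v : ℝ) := fun v => by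
      exact_mod_cast aux_deg_pos G hG hn v
    have hab : (⟨0, by omega⟩ : Fin n) ≠ ⟨1, by omega⟩ := by simp [Fin.ext_iff]
    set a : Fin n := ⟨0, by omega⟩ with hadef
    set b : Fin n := ⟨1, by omega⟩ with hbdef
    set f₀ : Fin n → ℝ := fun x =>
      if x = a then (G.degree b : ℝ) else if x = b then -(G.degree a : ℝ) else 0 with hf₀
    have hmean0 : (∑ x : Fin n, f₀ x * (G.degree x : ℝ)) = 0 := by
      have hterm : ∀ x : Fin n, f₀ x * (G.degree x:ℝ)
          = (if x = a then (G.degree b:ℝ)*(G.degree a:ℝ) else 0)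
            + (if x = b then -((G.degree b:ℝ)*(G.degree a:ℝ)) else 0) := by
        intro x
        simp only [hf₀]
        by_cases h1 : x = a
        · subst h1
          simp [hab]
        · by_cases h2 : x = b
          · subst h2
            simp [h1]
            ring
          · simp [h1, h2]
      rw [Finset.sum_congr rfl fun x _ => hterm x, Finset.sum_add_distrib]
      simp
    have hQ0 : G.qForm f₀ ≠ 0 := by
      have hpos : 0 < G.qForm f₀ := by
        refine Finset.sum_pos' (fun x _ => mul_nonneg (sq_nonneg _) (hdeg x).le)
          ⟨a, mem_univ a, ?_⟩
        have : f₀ a = (G.degree b : ℝ) := by simp [hf₀]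
        rw [this]
        have h1 := hdeg a
        have h2 := hdeg b
        positivity
      exact ne_of_gt hpos
    rw [SimpleGraph.lambda1, ge_iff_le]
    apply le_csInf
    · exact ⟨G.energyForm f₀ / G.qForm f₀, f₀, hmean0, hQ0, rfl⟩
    · rintro r ⟨f, hmean, hQ, rfl⟩
      exact aux_rayleigh_lower G hG hn f hmean hQ
end
end

section
/- Let G be a connected graph with harmonic eigenvector f for λ₁ of the normalized Laplacian, let u and v be vertices minimizing and maximizing f respectively, and let vol_P = Σ_{z: f(z)≥0} d(z) and vol_N = Σ_{z: f(z)<0} d(z). Then λ₁ ≥ 2/(dist(u,v)·√(vol_P·vol_N)). -/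
open Finset
open scoped Classical

noncomputable section

variable {V : Type*}

/-!
Put `a = max f`, `b = -min f` and `S = ∑_{f ≥ 0} f d = ∑_{f < 0} (-f) d` (the two agree because
`∑ f d = 0`). Termwise, `∑ f² d ≤ (a + b) S`; and `S ≤ a vol_P`, `S ≤ b vol_N` give
`2 S ≤ 2 √(a b vol_P vol_N) ≤ (a + b) √(vol_P vol_N)`. Cauchy–Schwarz along a shortest path from
`u` to `v` gives `(a + b)² ≤ dist(u, v) · ∑_{x ∼ y} (f x - f y)²`, and multiplying out yields
`2 ∑ f² d ≤ dist(u, v) · ∑_{x ∼ y} (f x - f y)² · √(vol_P vol_N)`.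
-/

theorem List.sq_sum_le_length_mul_sum_sq (l : List ℝ) :
    l.sum ^ 2 ≤ l.length * (l.map (· ^ 2)).sum := by
  have hsq : (l.map (· ^ 2)).sum = ∑ i : Fin l.length, l[i] ^ 2 := by
    conv_lhs => rw [← List.ofFn_getElem (xs := l)]
    rw [List.map_ofFn, List.sum_ofFn]
    rfl
  simpa [Fin.sum_univ_getElem, hsq] using
    sq_sum_le_card_mul_sum_sq (s := univ) (f := fun i : Fin l.length => l[i])

theorem two_mul_le_add_mul_sqrt_mul {s a b p n : ℝ} (hs : 0 ≤ s) (hap : s ≤ a * p)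
    (hbn : s ≤ b * n) (hp : 0 ≤ p) (hn : 0 ≤ n) (hab : 0 ≤ a + b) :
    2 * s ≤ (a + b) * √(p * n) := by
  rw [← Real.sqrt_sq hab, ← Real.sqrt_mul (sq_nonneg _)]
  apply Real.le_sqrt_of_sq_le
  -- `(a + b)² p n - (2 s)² = (a - b)² p n + 4 (a p · b n - s²)`
  nlinarith [mul_le_mul hap hbn hs (hs.trans hap), mul_nonneg (sq_nonneg (a - b)) (mul_nonneg hp hn)]

section WeightedSums

variable {ι : Type*} [Fintype ι] {w f : ι → ℝ} {m M : ℝ}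

theorem sum_filter_neg_eq_sum_filter_nonneg (hf0 : ∑ z, f z * w z = 0) :
    ∑ z ∈ univ.filter (fun z => f z < 0), -(f z * w z) =
      ∑ z ∈ univ.filter (fun z => 0 ≤ f z), f z * w z := by
  have hsplit := Finset.sum_filter_add_sum_filter_not univ (fun z => 0 ≤ f z) (f * w)
  simp only [not_le, Pi.mul_apply, hf0] at hsplit
  rw [Finset.sum_neg_distrib]
  linarith

theorem sum_sq_mul_le_sub_mul_sum_filter_nonneg (hw : ∀ z, 0 ≤ w z)
    (hf0 : ∑ z, f z * w z = 0) (hm : ∀ z, m ≤ f z) (hM : ∀ z, f z ≤ M) :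
    ∑ z, f z ^ 2 * w z ≤ (M - m) * ∑ z ∈ univ.filter (fun z => 0 ≤ f z), f z * w z := by
  rw [← Finset.sum_filter_add_sum_filter_not univ (fun z => 0 ≤ f z), sub_eq_add_neg, add_mul]
  nth_rw 2 [← sum_filter_neg_eq_sum_filter_nonneg hf0]
  simp only [not_le, Finset.mul_sum]
  refine add_le_add (Finset.sum_le_sum fun z hz => ?_) (Finset.sum_le_sum fun z hz => ?_)
  · have hfz : 0 ≤ f z := (Finset.mem_filter.mp hz).2
    calc f z ^ 2 * w z = f z * (f z * w z) := by ring
      _ ≤ M * (f z * w z) := mul_le_mul_of_nonneg_right (hM z) (mul_nonneg hfz (hw z))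
  · have hfz : f z < 0 := (Finset.mem_filter.mp hz).2
    calc f z ^ 2 * w z = -f z * -(f z * w z) := by ring
      _ ≤ -m * -(f z * w z) :=
        mul_le_mul_of_nonneg_right (neg_le_neg (hm z)) (neg_nonneg.mpr
          (mul_nonpos_of_nonpos_of_nonneg hfz.le (hw z)))

theorem two_mul_sum_filter_nonneg_le (hw : ∀ z, 0 ≤ w z) (hf0 : ∑ z, f z * w z = 0)
    (hm : ∀ z, m ≤ f z) (hM : ∀ z, f z ≤ M) (hmM : m ≤ M) :
    2 * ∑ z ∈ univ.filter (fun z => 0 ≤ f z), f z * w z ≤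
      (M - m) * √((∑ z ∈ univ.filter (fun z => 0 ≤ f z), w z) *
        ∑ z ∈ univ.filter (fun z => f z < 0), w z) := by
  rw [sub_eq_add_neg]
  refine two_mul_le_add_mul_sqrt_mul
    (Finset.sum_nonneg fun z hz => mul_nonneg (Finset.mem_filter.mp hz).2 (hw z)) ?_ ?_
    (Finset.sum_nonneg fun z _ => hw z) (Finset.sum_nonneg fun z _ => hw z) (by linarith)
  · rw [Finset.mul_sum]
    exact Finset.sum_le_sum fun z _ => mul_le_mul_of_nonneg_right (hM z) (hw z)
  · rw [← sum_filter_neg_eq_sum_filter_nonneg hf0, Finset.mul_sum]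
    refine Finset.sum_le_sum fun z _ => ?_
    rw [← neg_mul]
    exact mul_le_mul_of_nonneg_right (neg_le_neg (hm z)) (hw z)

theorem two_mul_sum_sq_mul_le (hw : ∀ z, 0 ≤ w z) (hf0 : ∑ z, f z * w z = 0)
    (hm : ∀ z, m ≤ f z) (hM : ∀ z, f z ≤ M) (hmM : m ≤ M) :
    2 * ∑ z, f z ^ 2 * w z ≤
      (M - m) ^ 2 * √((∑ z ∈ univ.filter (fun z => 0 ≤ f z), w z) *
        ∑ z ∈ univ.filter (fun z => f z < 0), w z) := by
  have hMm : 0 ≤ M - m := sub_nonneg.mpr hmM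
  calc 2 * ∑ z, f z ^ 2 * w z
      ≤ 2 * ((M - m) * ∑ z ∈ univ.filter (fun z => 0 ≤ f z), f z * w z) := by
        gcongr; exact sum_sq_mul_le_sub_mul_sum_filter_nonneg hw hf0 hm hM
    _ = (M - m) * (2 * ∑ z ∈ univ.filter (fun z => 0 ≤ f z), f z * w z) := by ring
    _ ≤ _ := by
        rw [sq, mul_assoc]
        exact mul_le_mul_of_nonneg_left (two_mul_sum_filter_nonneg_le hw hf0 hm hM hmM) hMm

end WeightedSums

namespace SimpleGraph

variable (G : SimpleGraph V)

def sqDiff (f : V → ℝ) : Sym2 V → ℝ :=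
  Sym2.lift ⟨fun x y => (f x - f y) ^ 2, fun x y => by ring⟩

lemma sqDiff_nonneg (f : V → ℝ) (e : Sym2 V) : 0 ≤ sqDiff f e :=
  Sym2.ind (fun x y => sq_nonneg (f x - f y)) e

lemma sum_darts_eq_sum_adj [Fintype V] {M : Type*} [AddCommMonoid M] (F : V → V → M) :
    ∑ d : G.Dart, F d.fst d.snd = ∑ x, ∑ y, if G.Adj x y then F x y else 0 := by
  rw [← Fintype.sum_prod_type', ← Finset.sum_filter, Finset.sum_subtype (p := fun p : V × V => G.Adj p.1 p.2) _ (by simp)]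
  exact Fintype.sum_equiv
    ⟨fun d => ⟨d.toProd, d.adj⟩, fun p => ⟨p.1, p.2⟩, fun _ => rfl, fun _ => rfl⟩ _ _
    fun _ => rfl

lemma sum_darts_edge [Fintype V] {M : Type*} [AddCommMonoid M] (g : Sym2 V → M) :
    ∑ d : G.Dart, g d.edge = 2 • ∑ e ∈ G.edgeFinset, g e := by
  rw [← Finset.sum_fiberwise_of_maps_to (g := Dart.edge) (t := G.edgeFinset)
    (fun d _ => G.mem_edgeFinset.mpr d.edge_mem), Finset.smul_sum]
  refine Finset.sum_congr rfl fun e he => ?_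
  rw [Finset.sum_congr rfl fun d hd => congrArg g (Finset.mem_filter.mp hd).2,
    Finset.sum_const, G.dart_edge_fiber_card e (G.mem_edgeFinset.mp he)]

lemma energyForm_eq_sum_sqDiff [Fintype V] (f : V → ℝ) :
    G.energyForm f = ∑ e ∈ G.edgeFinset, sqDiff f e := by
  rw [energyForm, ← sum_darts_eq_sum_adj (F := fun x y => (f x - f y) ^ 2)]
  change 1 / 2 * ∑ d : G.Dart, sqDiff f d.edge = _
  rw [G.sum_darts_edge, nsmul_eq_mul]
  ring

lemma energyForm_nonneg [Fintype V] (f : V → ℝ) : 0 ≤ G.energyForm f := by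
  rw [energyForm_eq_sum_sqDiff]
  exact Finset.sum_nonneg fun e _ => sqDiff_nonneg f e

lemma qForm_nonneg [Fintype V] (f : V → ℝ) : 0 ≤ G.qForm f :=
  Finset.sum_nonneg fun x _ => by positivity

variable {G}

lemma Walk.sub_eq_sum_darts (f : V → ℝ) {a b : V} (p : G.Walk a b) :
    f a - f b = (p.darts.map fun d => f d.fst - f d.snd).sum := by
  induction p with
  | nil => simp
  | cons h q ih => simp [← ih]

lemma Walk.sq_sub_le_length_mul_sum_sqDiff (f : V → ℝ) {a b : V} (p : G.Walk a b) :
    (f a - f b) ^ 2 ≤ p.length * (p.edges.map (sqDiff f)).sum := by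
  have := (p.darts.map fun d => f d.fst - f d.snd).sq_sum_le_length_mul_sum_sq
  rw [← p.sub_eq_sum_darts, List.length_map, p.length_darts, List.map_map] at this
  rwa [Walk.edges, List.map_map]

lemma Walk.IsTrail.sum_edges_le [Fintype V] {a b : V} {p : G.Walk a b} (hp : p.IsTrail)
    {g : Sym2 V → ℝ} (hg : ∀ e, 0 ≤ g e) :
    (p.edges.map g).sum ≤ ∑ e ∈ G.edgeFinset, g e := by
  rw [← List.sum_toFinset g hp.edges_nodup]
  refine Finset.sum_le_sum_of_subset_of_nonneg (fun e he => ?_) fun e _ _ => hg e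
  exact G.mem_edgeFinset.mpr (p.edges_subset_edgeSet (List.mem_toFinset.mp he))

lemma Reachable.sq_sub_le_dist_mul_energyForm [Fintype V] (f : V → ℝ) {a b : V}
    (h : G.Reachable a b) : (f a - f b) ^ 2 ≤ G.dist a b * G.energyForm f := by
  obtain ⟨p, hp, hlen⟩ := h.exists_path_of_dist
  calc (f a - f b) ^ 2 ≤ p.length * (p.edges.map (sqDiff f)).sum :=
        p.sq_sub_le_length_mul_sum_sqDiff f
    _ ≤ G.dist a b * G.energyForm f := by
      rw [hlen, energyForm_eq_sum_sqDiff]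
      gcongr
      exact hp.isTrail.sum_edges_le (sqDiff_nonneg f)

end SimpleGraph

theorem lambda1_ge_two_div_dist_mul_sqrt_general [Fintype V] (G : SimpleGraph V)
    (f : V → ℝ)
    (hf0 : (∑ x : V, f x * (G.degree x : ℝ)) = 0) (hfq : G.qForm f ≠ 0)
    (hmin : G.energyForm f / G.qForm f = G.lambda1)
    (u v : V) (hu : ∀ z, f u ≤ f z) (hv : ∀ z, f z ≤ f v) :
    G.lambda1 ≥ 2 / ((G.dist u v : ℝ) *
      Real.sqrt ((∑ z ∈ univ.filter (fun z => 0 ≤ f z), (G.degree z : ℝ)) *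
        (∑ z ∈ univ.filter (fun z => f z < 0), (G.degree z : ℝ)))) := by
  rw [ge_iff_le, ← hmin]
  set R := (G.dist u v : ℝ) * Real.sqrt ((∑ z ∈ univ.filter (fun z => 0 ≤ f z),
    (G.degree z : ℝ)) * (∑ z ∈ univ.filter (fun z => f z < 0), (G.degree z : ℝ))) with hR
  -- `x / 0 = 0`, and `G.dist u v = 0` when `v` is unreachable from `u`
  obtain hR0 | hRpos := (show 0 ≤ R by positivity).eq_or_lt
  · rw [← hR0, div_zero]
    exact div_nonneg (G.energyForm_nonneg f) (G.qForm_nonneg f)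
  have hreach : G.Reachable u v := by
    by_contra h
    rw [hR, SimpleGraph.dist_eq_zero_of_not_reachable h, Nat.cast_zero, zero_mul] at hRpos
    exact hRpos.false
  rw [div_le_div_iff₀ hRpos ((G.qForm_nonneg f).lt_of_ne' hfq)]
  calc 2 * G.qForm f ≤ (f v - f u) ^ 2 * Real.sqrt _ :=
        two_mul_sum_sq_mul_le (fun z => Nat.cast_nonneg _) hf0 hu hv (hu v)
    _ ≤ (G.dist u v * G.energyForm f) * Real.sqrt _ := by
        gcongr
        rw [sub_sq_comm]
        exact hreach.sq_sub_le_dist_mul_energyForm f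
    _ = G.energyForm f * R := by ring

/-- Lemma: for a connected graph with harmonic eigenvector `f` for `λ₁`, extremal vertices
`u`, `v`, we have `λ₁ ≥ 2 / (dist(u,v) √(vol_P · vol_N))`. -/
theorem lambda1_ge_two_div_dist_mul_sqrt [Fintype V] (G : SimpleGraph V)
    (hG : G.Connected) (f : V → ℝ)
    (hf0 : (∑ x : V, f x * (G.degree x : ℝ)) = 0) (hfq : G.qForm f ≠ 0)
    (hmin : G.energyForm f / G.qForm f = G.lambda1)
    (u v : V) (hu : ∀ z, f u ≤ f z) (hv : ∀ z, f z ≤ f v) :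
    G.lambda1 ≥ 2 / ((G.dist u v : ℝ) *
      Real.sqrt ((∑ z ∈ univ.filter (fun z => 0 ≤ f z), (G.degree z : ℝ)) *
        (∑ z ∈ univ.filter (fun z => f z < 0), (G.degree z : ℝ)))) :=
  lambda1_ge_two_div_dist_mul_sqrt_general G f hf0 hfq hmin u v hu hv
end
end

section
/- Fix positive integers d₁,...,dₙ (n ≥ 3). Among all real sequences f₁ ≤ f₂,...,f_{n-1} ≤ fₙ (i.e., f₁ ≤ f_k ≤ fₙ for all k) satisfying Σ f_i d_i = 0 and Σ f_i² d_i = 1, any sequence minimizing (fₙ − f₁)² has the property that every f_k equals either f₁ or fₙ. -/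
/-!
If some `f k` lay strictly between `f₁` and `fₙ`, move it to the endpoint on the far side of the
mean `0`. This keeps the extreme values and strictly increases the weighted variance, because the
weights other than `d k` have positive total. Standardizing the new sequence (subtract its mean,
divide by its standard deviation `σ > 1`) gives an admissible sequence of range `(fₙ - f₁) / σ`,
contradicting minimality.
-/

open Finset

section WeightedMoments

variable {ι : Type*} [Fintype ι]

noncomputable def weightedMean (w f : ι → ℝ) : ℝ := (∑ i, f i * w i) / ∑ i, w i

noncomputable def weightedVar (w f : ι → ℝ) : ℝ := ∑ i, (f i - weightedMean w f) ^ 2 * w i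

noncomputable def standardize (w f : ι → ℝ) (i : ι) : ℝ :=
  (f i - weightedMean w f) / √(weightedVar w f)

variable {w : ι → ℝ}

theorem weightedVar_eq (hW : ∑ i, w i ≠ 0) (f : ι → ℝ) :
    weightedVar w f = ∑ i, f i ^ 2 * w i - (∑ i, f i * w i) ^ 2 / ∑ i, w i := by
  have expand : ∀ i, (f i - weightedMean w f) ^ 2 * w i =
      f i ^ 2 * w i - 2 * weightedMean w f * (f i * w i) + weightedMean w f ^ 2 * w i := by
    intro i; ring
  simp only [weightedVar, expand, sum_add_distrib, sum_sub_distrib, ← mul_sum]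
  unfold weightedMean
  field_simp
  ring

theorem sum_apply_update [DecidableEq ι] (g : ι → ℝ → ℝ) (f : ι → ℝ) (k : ι) (c : ℝ) :
    ∑ i, g i (Function.update f k c i) = ∑ i, g i (f i) + (g k c - g k (f k)) := by
  have away : ∀ i ∈ univ.erase k, g i (Function.update f k c i) = g i (f i) := fun i hi ↦ by
    rw [Function.update_of_ne (ne_of_mem_erase hi)]
  rw [← add_sum_erase _ _ (mem_univ k), ← add_sum_erase _ _ (mem_univ k), sum_congr rfl away,
    Function.update_self]
  ring

theorem weightedVar_update [DecidableEq ι] (hW : ∑ i, w i ≠ 0) (f : ι → ℝ) (k : ι) (c : ℝ) :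
    weightedVar w (Function.update f k c) = weightedVar w f +
      w k * (c - f k) * (2 * (f k - weightedMean w f) + (c - f k) * (1 - w k / ∑ i, w i)) := by
  rw [weightedVar_eq hW, weightedVar_eq hW, sum_apply_update (fun i x ↦ x ^ 2 * w i),
    sum_apply_update (fun i x ↦ x * w i), weightedMean]
  field_simp
  ring

theorem weightedVar_lt_update [DecidableEq ι] (hk : 0 < w k) (hkW : w k < ∑ i, w i)
    {f : ι → ℝ} {c : ℝ} (hc : c ≠ f k) (hsign : 0 ≤ (c - f k) * (f k - weightedMean w f)) :
    weightedVar w f < weightedVar w (Function.update f k c) := by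
  have hW : 0 < ∑ i, w i := hk.trans hkW
  have hfrac : 0 < 1 - w k / ∑ i, w i := by rw [sub_pos, div_lt_one hW]; exact hkW
  have hsq : 0 < (c - f k) ^ 2 := by positivity [sub_ne_zero.2 hc]
  rw [weightedVar_update hW.ne']
  nlinarith [mul_pos hk (mul_pos hsq hfrac), mul_nonneg hk.le hsign]

theorem sum_standardize_mul (hW : ∑ i, w i ≠ 0) (f : ι → ℝ) :
    ∑ i, standardize w f i * w i = 0 := by
  simp only [standardize, div_mul_eq_mul_div, ← sum_div, sub_mul, sum_sub_distrib, ← mul_sum,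
    weightedMean]
  rw [mul_div_cancel_right₀ _ hW, sub_self, zero_div]

theorem sum_standardize_sq_mul {f : ι → ℝ} (hV : 0 < weightedVar w f) :
    ∑ i, standardize w f i ^ 2 * w i = 1 := by
  simp only [standardize, div_pow, Real.sq_sqrt hV.le, div_mul_eq_mul_div, ← sum_div]
  exact div_self hV.ne'

theorem standardize_le_standardize {f : ι → ℝ} {i j : ι} (h : f i ≤ f j) :
    standardize w f i ≤ standardize w f j :=
  div_le_div_of_nonneg_right (by linarith) (Real.sqrt_nonneg _)

theorem sq_standardize_sub_standardize {f : ι → ℝ} (hV : 0 ≤ weightedVar w f) (i j : ι) :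
    (standardize w f j - standardize w f i) ^ 2 = (f j - f i) ^ 2 / weightedVar w f := by
  rw [standardize, standardize, ← sub_div, sub_sub_sub_cancel_right, div_pow, Real.sq_sqrt hV]

end WeightedMoments

theorem exists_mem_Icc_ne_sub_mul_nonneg {a b x : ℝ} (ha : a < x) (hb : x < b) :
    ∃ c ∈ Set.Icc a b, c ≠ x ∧ 0 ≤ (c - x) * x := by
  rcases le_or_gt 0 x with hx | hx
  · exact ⟨b, ⟨by linarith, le_rfl⟩, hb.ne', mul_nonneg (by linarith) hx⟩
  · exact ⟨a, ⟨le_rfl, by linarith⟩, ha.ne, mul_nonneg_of_nonpos_of_nonpos (by linarith) hx.le⟩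

theorem update_apply_between {ι : Type*} [DecidableEq ι] {f : ι → ℝ} {lo hi k : ι}
    (hlo : k ≠ lo) (hhi : k ≠ hi) (hf : ∀ i, f lo ≤ f i ∧ f i ≤ f hi) {c : ℝ}
    (hc : c ∈ Set.Icc (f lo) (f hi)) (i : ι) :
    Function.update f k c lo ≤ Function.update f k c i ∧
      Function.update f k c i ≤ Function.update f k c hi := by
  rw [Function.update_of_ne hlo.symm, Function.update_of_ne hhi.symm, Function.update_apply]
  split_ifs
  exacts [hc, hf i]

/-- Proposition 2.1: among sequences with `f₁ ≤ f_k ≤ f_n`, weighted mean zero and weighted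
second moment one, a minimizer of `(f_n - f₁)²` takes only the two extreme values. -/
theorem minimizer_two_valued (n : ℕ) (d : Fin (n + 3) → ℕ) (hd : ∀ i, 0 < d i)
    (f : Fin (n + 3) → ℝ)
    (hf1 : (∑ i, f i * (d i : ℝ)) = 0) (hf2 : (∑ i, (f i)^2 * (d i : ℝ)) = 1)
    (hfb : ∀ k, f 0 ≤ f k ∧ f k ≤ f (Fin.last (n + 2)))
    (hmin : ∀ g : Fin (n + 3) → ℝ, (∑ i, g i * (d i : ℝ)) = 0 →
      (∑ i, (g i)^2 * (d i : ℝ)) = 1 →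
      (∀ k, g 0 ≤ g k ∧ g k ≤ g (Fin.last (n + 2))) →
      (f (Fin.last (n + 2)) - f 0)^2 ≤ (g (Fin.last (n + 2)) - g 0)^2) :
    ∀ k, f k = f 0 ∨ f k = f (Fin.last (n + 2)) := by
  intro k
  by_contra! hk
  have hka : f 0 < f k := (hfb k).1.lt_of_ne' hk.1
  have hkb : f k < f (Fin.last (n + 2)) := (hfb k).2.lt_of_ne hk.2
  obtain ⟨c, hc_mem, hc_ne, hc_sign⟩ := exists_mem_Icc_ne_sub_mul_nonneg hka hkb
  let w : Fin (n + 3) → ℝ := fun i ↦ d i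
  have hw : ∀ i, 0 < w i := fun i ↦ Nat.cast_pos.2 (hd i)
  have hk0 : k ≠ 0 := by rintro rfl; exact lt_irrefl _ hka
  have hwk : w k < ∑ i, w i :=
    single_lt_sum hk0.symm (mem_univ k) (mem_univ 0) (hw 0) fun i _ _ ↦ (hw i).le
  have hW : ∑ i, w i ≠ 0 := (hw k |>.trans hwk).ne'
  have hmean : weightedMean w f = 0 := by rw [weightedMean, hf1, zero_div]
  have hvar : weightedVar w f = 1 := by
    rw [weightedVar_eq hW, hf1, hf2]; ring
  have hvar_lt : 1 < weightedVar w (Function.update f k c) :=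
    hvar ▸ weightedVar_lt_update (hw k) hwk hc_ne (by rwa [hmean, sub_zero])
  have hkl : k ≠ Fin.last (n + 2) := by rintro rfl; exact lt_irrefl _ hkb
  have hbetween := update_apply_between hk0 hkl hfb hc_mem
  have hrange := hmin (standardize w (Function.update f k c))
    (sum_standardize_mul hW _) (sum_standardize_sq_mul (by linarith))
    fun i ↦ ⟨standardize_le_standardize (hbetween i).1, standardize_le_standardize (hbetween i).2⟩
  rw [sq_standardize_sub_standardize (by linarith), Function.update_of_ne hk0.symm,
    Function.update_of_ne hkl.symm] at hrange
  exact hrange.not_gt (div_lt_self (by nlinarith) hvar_lt)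
end

section
/- Let D, d ≥ 1 and n be such that 4 divides n − D + 1. Let H₁ and H₂ be d-regular graphs on (n−D+1)/2 vertices each, and let H be the graph obtained by joining a vertex of H₁ to a vertex of H₂ by a path of length D (so H has n vertices). Then the normalized Laplacian spectral gap satisfies λ₁(H) ≤ 4/(D·d·(n−D)). -/
open Finset
open scoped Classical

noncomputable section

set_option maxHeartbeats 1600000

variable {V : Type*}

/-- Proposition: if `H` consists of two `d`-regular graphs on `(n-D+1)/2` vertices each,
joined by a path of length `D`, then `λ₁(H) ≤ 4/(D·d·(n-D))`. -/
theorem lambda1_le_of_two_regular_joined_by_path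
    (n D d : ℕ) (hD : 1 ≤ D) (hd : 1 ≤ d) (hDn : D < n) (hdiv : 4 ∣ (n - D + 1))
    [Fintype V] (hV : Fintype.card V = n)
    (H : SimpleGraph V) (A B : Finset V) (p : Fin (D + 1) → V)
    (hA : A.card = (n - D + 1) / 2) (hB : B.card = (n - D + 1) / 2)
    (hAB : Disjoint A B)
    (hp0 : p 0 ∈ A) (hpD : p (Fin.last D) ∈ B)
    (hpinj : Function.Injective p)
    (hpint : ∀ i : Fin (D + 1), i ≠ 0 → i ≠ Fin.last D → p i ∉ A ∧ p i ∉ B)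
    (hcover : ∀ v : V, v ∈ A ∨ v ∈ B ∨ ∃ i, v = p i)
    (hpath : ∀ i : Fin D, H.Adj (p i.castSucc) (p i.succ))
    (hloc : ∀ x y, H.Adj x y → (x ∈ A ∧ y ∈ A) ∨ (x ∈ B ∧ y ∈ B) ∨
      ∃ i : Fin D, (x = p i.castSucc ∧ y = p i.succ) ∨ (y = p i.castSucc ∧ x = p i.succ))
    (hregA : ∀ x ∈ A, (A.filter (fun y => H.Adj x y)).card = d)
    (hregB : ∀ x ∈ B, (B.filter (fun y => H.Adj x y)).card = d) :
    H.lambda1 ≤ 4 / ((D : ℝ) * (d : ℝ) * ((n - D : ℕ) : ℝ)) := by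
  classical
  have hDr : (D : ℝ) ≠ 0 := Nat.cast_ne_zero.mpr (by omega)
  -- the test function
  set f : V → ℝ := fun v =>
    if v ∈ A then 1 else if v ∈ B then -1 else
      if h : ∃ i, v = p i then 1 - 2 * ((h.choose : Fin (D+1)).val : ℝ) / D else 0 with hfdef
  have notA : ∀ i : Fin (D+1), i ≠ 0 → p i ∉ A := by
    intro i hi
    by_cases hl : i = Fin.last D
    · subst hl; exact fun h => (Finset.disjoint_left.mp hAB h) hpD
    · exact (hpint i hi hl).1
  have notB : ∀ i : Fin (D+1), i ≠ Fin.last D → p i ∉ B := by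
    intro i hl
    by_cases hi : i = 0
    · subst hi; exact fun h => (Finset.disjoint_left.mp hAB hp0) h
    · exact (hpint i hi hl).2
  have hlast0 : (Fin.last D) ≠ (0 : Fin (D+1)) := by
    intro h; have := congrArg Fin.val h; simp [Fin.last] at this; omega
  have hfA : ∀ v ∈ A, f v = 1 := by intro v hv; simp [hfdef, hv]
  have hfB : ∀ v ∈ B, f v = -1 := by
    intro v hv
    have hvA : v ∉ A := fun h => (Finset.disjoint_left.mp hAB h) hv
    simp [hfdef, hv, hvA]
  have hf : ∀ i : Fin (D+1), f (p i) = 1 - 2 * (i.val : ℝ) / D := by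
    intro i
    by_cases h0 : i = 0
    · subst h0; rw [hfA _ hp0]; simp
    by_cases hl : i = Fin.last D
    · subst hl; rw [hfB _ hpD]
      simp only [Fin.val_last]
      field_simp
      norm_num
    · have hA' : p i ∉ A := (hpint i h0 hl).1
      have hB' : p i ∉ B := (hpint i h0 hl).2
      have hex : ∃ j, p i = p j := ⟨i, rfl⟩
      have h1 : f (p i) = 1 - 2 * ((hex.choose).val : ℝ) / D := by
        simp only [hfdef]
        rw [if_neg hA', if_neg hB', dif_pos hex]
      have h2 : hex.choose = i := (hpinj hex.choose_spec).symm
      rw [h1, h2]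
  -- degree lemmas
  have hdeg_def : ∀ x : V, H.degree x = (H.neighborFinset x).card := fun x => rfl
  have hsubA : ∀ x, (A.filter (fun y => H.Adj x y)) ⊆ H.neighborFinset x := by
    intro x y hy
    rw [SimpleGraph.mem_neighborFinset]
    exact (Finset.mem_filter.mp hy).2
  have hsubB : ∀ x, (B.filter (fun y => H.Adj x y)) ⊆ H.neighborFinset x := by
    intro x y hy
    rw [SimpleGraph.mem_neighborFinset]
    exact (Finset.mem_filter.mp hy).2
  have hdegL : ∀ x, (x ∈ A ∨ x ∈ B) → (d : ℕ) ≤ H.degree x := by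
    rintro x (hx | hx)
    · rw [hdeg_def, ← hregA x hx]; exact Finset.card_le_card (hsubA x)
    · rw [hdeg_def, ← hregB x hx]; exact Finset.card_le_card (hsubB x)
  have dA : ∀ x ∈ A, x ≠ p 0 → H.degree x = d := by
    intro x hx hx0
    have hnbr : H.neighborFinset x = A.filter (fun y => H.Adj x y) := by
      apply Finset.Subset.antisymm _ (hsubA x)
      intro y hy
      rw [SimpleGraph.mem_neighborFinset] at hy
      rw [Finset.mem_filter]
      refine ⟨?_, hy⟩
      rcases hloc x y hy with ⟨_, h2⟩ | ⟨h1, _⟩ | ⟨i, ⟨hxe, hye⟩ | ⟨hye, hxe⟩⟩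
      · exact h2
      · exact absurd h1 (Finset.disjoint_left.mp hAB hx)
      · by_cases hc : i.castSucc = (0 : Fin (D+1))
        · exact absurd (hxe.trans (congrArg p hc)) hx0
        · exact absurd hx (hxe ▸ notA _ hc)
      · exact absurd hx (hxe ▸ notA _ (Fin.succ_ne_zero i))
    rw [hdeg_def, hnbr]; exact hregA x hx
  have dB : ∀ x ∈ B, x ≠ p (Fin.last D) → H.degree x = d := by
    intro x hx hxl
    have hnbr : H.neighborFinset x = B.filter (fun y => H.Adj x y) := by
      apply Finset.Subset.antisymm _ (hsubB x)
      intro y hy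
      rw [SimpleGraph.mem_neighborFinset] at hy
      rw [Finset.mem_filter]
      refine ⟨?_, hy⟩
      rcases hloc x y hy with ⟨h1, _⟩ | ⟨_, h2⟩ | ⟨i, ⟨hxe, hye⟩ | ⟨hye, hxe⟩⟩
      · exact absurd hx (Finset.disjoint_left.mp hAB h1)
      · exact h2
      · exact absurd hx (hxe ▸ notB _ (Fin.castSucc_lt_last i).ne)
      · by_cases hc : i.succ = Fin.last D
        · exact absurd (hxe.trans (congrArg p hc)) hxl
        · exact absurd hx (hxe ▸ notB _ hc)
    rw [hdeg_def, hnbr]; exact hregB x hx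
  -- endpoint degrees
  have hi0 : (0:ℕ) < D := hD
  set i0 : Fin D := ⟨0, hi0⟩ with hi0def
  have hi0c : i0.castSucc = (0 : Fin (D+1)) := by ext; simp [hi0def]
  have dA0 : H.degree (p 0) = d + 1 := by
    have hnbr : H.neighborFinset (p 0) =
        insert (p i0.succ) (A.filter (fun y => H.Adj (p 0) y)) := by
      apply Finset.Subset.antisymm
      · intro y hy
        rw [SimpleGraph.mem_neighborFinset] at hy
        rw [Finset.mem_insert, Finset.mem_filter]
        rcases hloc (p 0) y hy with ⟨_, h2⟩ | ⟨h1, _⟩ | ⟨i, ⟨hxe, hye⟩ | ⟨hye, hxe⟩⟩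
        · exact Or.inr ⟨h2, hy⟩
        · exact absurd h1 (Finset.disjoint_left.mp hAB hp0)
        · have : i = i0 := by
            have := hpinj hxe
            ext
            have := congrArg Fin.val this
            simpa [hi0def] using this.symm
          exact Or.inl (hye.trans (congrArg p (congrArg Fin.succ this)))
        · exact absurd (hpinj hxe).symm (Fin.succ_ne_zero i)
      · intro y hy
        rw [SimpleGraph.mem_neighborFinset]
        rcases Finset.mem_insert.mp hy with rfl | hy
        · have := hpath i0; rwa [hi0c] at this
        · exact (Finset.mem_filter.mp hy).2
    have hnot : p i0.succ ∉ A.filter (fun y => H.Adj (p 0) y) := by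
      intro h
      exact notA _ (Fin.succ_ne_zero i0) (Finset.mem_filter.mp h).1
    rw [hdeg_def, hnbr, Finset.card_insert_of_notMem hnot, hregA _ hp0]
  have hi1 : D - 1 < D := by omega
  set i1 : Fin D := ⟨D - 1, hi1⟩ with hi1def
  have hi1s : i1.succ = Fin.last D := by ext; simp [hi1def]; omega
  have dBl : H.degree (p (Fin.last D)) = d + 1 := by
    have hnbr : H.neighborFinset (p (Fin.last D)) =
        insert (p i1.castSucc) (B.filter (fun y => H.Adj (p (Fin.last D)) y)) := by
      apply Finset.Subset.antisymm
      · intro y hy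
        rw [SimpleGraph.mem_neighborFinset] at hy
        rw [Finset.mem_insert, Finset.mem_filter]
        rcases hloc (p (Fin.last D)) y hy with ⟨h1, _⟩ | ⟨_, h2⟩ | ⟨i, ⟨hxe, hye⟩ | ⟨hye, hxe⟩⟩
        · exact absurd hpD (Finset.disjoint_left.mp hAB h1)
        · exact Or.inr ⟨h2, hy⟩
        · exact absurd (hpinj hxe).symm (Fin.castSucc_lt_last i).ne
        · have : i = i1 := by
            have h := hpinj hxe
            ext
            have := congrArg Fin.val h
            simp [hi1def, Fin.last] at this ⊢
            omega
          exact Or.inl (hye.trans (congrArg p (congrArg Fin.castSucc this)))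
      · intro y hy
        rw [SimpleGraph.mem_neighborFinset]
        rcases Finset.mem_insert.mp hy with rfl | hy
        · have := (hpath i1).symm; rwa [hi1s] at this
        · exact (Finset.mem_filter.mp hy).2
    have hnot : p i1.castSucc ∉ B.filter (fun y => H.Adj (p (Fin.last D)) y) := by
      intro h
      exact notB _ (Fin.castSucc_lt_last i1).ne (Finset.mem_filter.mp h).1
    rw [hdeg_def, hnbr, Finset.card_insert_of_notMem hnot, hregB _ hpD]
  -- internal degrees
  have dI : ∀ j : Fin (D+1), j ≠ 0 → j ≠ Fin.last D → H.degree (p j) = 2 := by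
    intro j hj0 hjl
    have hjD : j.val < D := by
      have := j.isLt
      have : j.val ≠ D := fun h => hjl (by ext; simpa [Fin.last] using h)
      omega
    have hj1 : 1 ≤ j.val := by
      have : j.val ≠ 0 := fun h => hj0 (by ext; simpa using h)
      omega
    set a : Fin D := ⟨j.val, hjD⟩ with hadef
    set b : Fin D := ⟨j.val - 1, by omega⟩ with hbdef
    have hac : a.castSucc = j := by ext; simp [hadef]
    have hbs : b.succ = j := by ext; simp [hbdef]; omega
    have hnbr : H.neighborFinset (p j) = {p a.succ, p b.castSucc} := by
      apply Finset.Subset.antisymm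
      · intro y hy
        rw [SimpleGraph.mem_neighborFinset] at hy
        rw [Finset.mem_insert, Finset.mem_singleton]
        rcases hloc (p j) y hy with ⟨h1, _⟩ | ⟨h1, _⟩ | ⟨i, ⟨hxe, hye⟩ | ⟨hye, hxe⟩⟩
        · exact absurd h1 (hpint j hj0 hjl).1
        · exact absurd h1 (hpint j hj0 hjl).2
        · have : i = a := Fin.castSucc_injective D ((hpinj hxe).symm.trans hac.symm)
          exact Or.inl (hye.trans (congrArg p (congrArg Fin.succ this)))
        · have : i = b := by
            have h := hpinj hxe
            ext
            have := congrArg Fin.val h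
            simp [hbdef] at this ⊢
            omega
          exact Or.inr (hye.trans (congrArg p (congrArg Fin.castSucc this)))
      · intro y hy
        rw [SimpleGraph.mem_neighborFinset]
        rcases Finset.mem_insert.mp hy with rfl | hy
        · have := hpath a; rwa [hac] at this
        · rw [Finset.mem_singleton] at hy
          subst hy
          have := (hpath b).symm; rwa [hbs] at this
    have hne : p a.succ ≠ p b.castSucc := by
      intro h
      have h2 := congrArg Fin.val (hpinj h)
      simp [hadef, hbdef] at h2
      omega
    rw [hdeg_def, hnbr, Finset.card_insert_of_notMem (by simpa using hne),
      Finset.card_singleton]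
  -- partition of V
  set I : Finset (Fin (D+1)) :=
    Finset.univ.filter (fun i => i ≠ 0 ∧ i ≠ Fin.last D) with hIdef
  set P : Finset V := I.image p with hPdef
  have hPmem : ∀ v, v ∈ P ↔ ∃ i : Fin (D+1), i ≠ 0 ∧ i ≠ Fin.last D ∧ v = p i := by
    intro v
    simp only [hPdef, Finset.mem_image, hIdef, Finset.mem_filter, Finset.mem_univ, true_and]
    constructor
    · rintro ⟨i, ⟨h1, h2⟩, rfl⟩; exact ⟨i, h1, h2, rfl⟩
    · rintro ⟨i, h1, h2, rfl⟩; exact ⟨i, ⟨h1, h2⟩, rfl⟩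
  have hdisjABP : Disjoint (A ∪ B) P := by
    rw [Finset.disjoint_right]
    intro v hv
    rcases (hPmem v).mp hv with ⟨i, h1, h2, rfl⟩
    rw [Finset.mem_union]
    rintro (h | h)
    · exact (hpint i h1 h2).1 h
    · exact (hpint i h1 h2).2 h
  have huniv : (Finset.univ : Finset V) = (A ∪ B) ∪ P := by
    apply Finset.Subset.antisymm _ (Finset.subset_univ _)
    intro v _
    rw [Finset.mem_union, Finset.mem_union]
    rcases hcover v with h | h | ⟨i, rfl⟩
    · exact Or.inl (Or.inl h)
    · exact Or.inl (Or.inr h)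
    · by_cases h0 : i = 0
      · subst h0; exact Or.inl (Or.inl hp0)
      by_cases hl : i = Fin.last D
      · subst hl; exact Or.inl (Or.inr hpD)
      · exact Or.inr ((hPmem _).mpr ⟨i, h0, hl, rfl⟩)
  -- sums over A and B
  have hcardAB : A.card = B.card := by rw [hA, hB]
  have hAsum : ∑ x ∈ A, f x * (H.degree x : ℝ) = ((d:ℝ) + 1) + ((A.card : ℝ) - 1) * d := by
    conv_lhs => rw [← Finset.insert_erase hp0]
    rw [Finset.sum_insert (Finset.notMem_erase _ _)]
    have h1 : f (p 0) * (H.degree (p 0) : ℝ) = (d:ℝ) + 1 := by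
      rw [hfA _ hp0, dA0]; push_cast; ring
    have h2 : ∑ x ∈ A.erase (p 0), f x * (H.degree x : ℝ)
        = ((A.card : ℝ) - 1) * d := by
      have hconst : ∀ x ∈ A.erase (p 0), f x * (H.degree x : ℝ) = (d:ℝ) := by
        intro x hx
        have hxA : x ∈ A := Finset.mem_of_mem_erase hx
        rw [hfA _ hxA, dA _ hxA (Finset.ne_of_mem_erase hx), one_mul]
      rw [Finset.sum_congr rfl hconst, Finset.sum_const,
        Finset.card_erase_of_mem hp0, nsmul_eq_mul]
      have hA1 : 1 ≤ A.card := Finset.card_pos.mpr ⟨_, hp0⟩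
      push_cast [hA1]
      ring
    rw [h1, h2]
  have hBsum : ∑ x ∈ B, f x * (H.degree x : ℝ) = -(((d:ℝ) + 1) + ((B.card : ℝ) - 1) * d) := by
    conv_lhs => rw [← Finset.insert_erase hpD]
    rw [Finset.sum_insert (Finset.notMem_erase _ _)]
    have h1 : f (p (Fin.last D)) * (H.degree (p (Fin.last D)) : ℝ) = -((d:ℝ) + 1) := by
      rw [hfB _ hpD, dBl]; push_cast; ring
    have h2 : ∑ x ∈ B.erase (p (Fin.last D)), f x * (H.degree x : ℝ)
        = -(((B.card : ℝ) - 1) * d) := by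
      have hconst : ∀ x ∈ B.erase (p (Fin.last D)), f x * (H.degree x : ℝ) = -(d:ℝ) := by
        intro x hx
        have hxB : x ∈ B := Finset.mem_of_mem_erase hx
        rw [hfB _ hxB, dB _ hxB (Finset.ne_of_mem_erase hx)]
        push_cast; ring
      rw [Finset.sum_congr rfl hconst, Finset.sum_const,
        Finset.card_erase_of_mem hpD, nsmul_eq_mul]
      have hB1 : 1 ≤ B.card := Finset.card_pos.mpr ⟨_, hpD⟩
      push_cast [hB1]
      ring
    rw [h1, h2]; ring
  -- sum over internal path vertices
  have hIuniv : ∑ i : Fin (D+1), (1 - 2 * (i.val : ℝ) / D) = 0 := by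
    rw [Finset.sum_sub_distrib]
    have h1 : ∑ _i : Fin (D+1), (1:ℝ) = (D:ℝ) + 1 := by
      rw [Finset.sum_const, Finset.card_univ, Fintype.card_fin, nsmul_eq_mul]; push_cast; ring
    have h2 : ∑ i : Fin (D+1), 2 * (i.val : ℝ) / D = (D:ℝ) + 1 := by
      rw [← Finset.sum_div, ← Finset.mul_sum]
      have h3 : ∑ i : Fin (D+1), (i.val : ℝ) = (D:ℝ) * (D + 1) / 2 := by
        rw [Fin.sum_univ_eq_sum_range (fun i => (i : ℝ)) (D+1)]
        have h4 : ((∑ i ∈ Finset.range (D+1), (i:ℝ))) * 2 = ((D:ℝ)+1) * D := by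
          have h5 := Finset.sum_range_id_mul_two (D+1)
          have h6 : D+1-1 = D := by omega
          rw [h6] at h5
          have h7 := congrArg (Nat.cast (R:=ℝ)) h5
          push_cast at h7
          linarith
        linarith
      rw [h3]
      field_simp
    rw [h1, h2]; ring
  have hIsub : ∑ i ∈ I, (1 - 2 * (i.val : ℝ) / D) = 0 := by
    have hsplit : Finset.univ = I ∪ {0, Fin.last D} := by
      apply Finset.Subset.antisymm _ (Finset.subset_univ _)
      intro i _
      rw [Finset.mem_union, hIdef, Finset.mem_filter]
      by_cases h0 : i = 0
      · exact Or.inr (by simp [h0])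
      by_cases hl : i = Fin.last D
      · exact Or.inr (by simp [hl])
      · exact Or.inl ⟨Finset.mem_univ _, h0, hl⟩
    have hdisj : Disjoint I ({0, Fin.last D} : Finset (Fin (D+1))) := by
      rw [Finset.disjoint_right]
      intro i hi
      rw [hIdef, Finset.mem_filter]
      rcases Finset.mem_insert.mp hi with rfl | hi
      · rintro ⟨_, h, _⟩; exact h rfl
      · rw [Finset.mem_singleton] at hi; subst hi
        rintro ⟨_, _, h⟩; exact h rfl
    have := hIuniv
    rw [hsplit, Finset.sum_union hdisj] at this
    have hpair : ∑ i ∈ ({0, Fin.last D} : Finset (Fin (D+1))), (1 - 2 * (i.val : ℝ) / D) = 0 := by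
      rw [Finset.sum_pair (Ne.symm hlast0)]
      simp only [Fin.val_zero, Fin.val_last]
      field_simp
      norm_num
    rw [hpair] at this
    linarith
  have hPsum : ∑ x ∈ P, f x * (H.degree x : ℝ) = 0 := by
    rw [hPdef, Finset.sum_image (fun a _ b _ h => hpinj h)]
    have : ∀ i ∈ I, f (p i) * (H.degree (p i) : ℝ) = 2 * (1 - 2 * (i.val : ℝ) / D) := by
      intro i hi
      rw [hIdef, Finset.mem_filter] at hi
      rw [hf i, dI i hi.2.1 hi.2.2]
      push_cast; ring
    rw [Finset.sum_congr rfl this, ← Finset.mul_sum, hIsub, mul_zero]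
  have hsum0 : ∑ x : V, f x * (H.degree x : ℝ) = 0 := by
    rw [huniv, Finset.sum_union hdisjABP, Finset.sum_union hAB, hAsum, hBsum, hPsum, hcardAB]
    ring
  -- qForm lower bound
  have hQ : ((n - D + 1 : ℕ) : ℝ) * d ≤ H.qForm f := by
    have h1 : ∀ x ∈ A ∪ B, (d:ℝ) ≤ (f x)^2 * (H.degree x : ℝ) := by
      intro x hx
      rcases Finset.mem_union.mp hx with hx | hx
      · rw [hfA _ hx, one_pow, one_mul]
        exact_mod_cast hdegL x (Or.inl hx)
      · rw [hfB _ hx]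
        norm_num
        exact_mod_cast hdegL x (Or.inr hx)
    have hcard2 : A.card + B.card = n - D + 1 := by rw [hA, hB]; omega
    calc ((n - D + 1 : ℕ) : ℝ) * d = ((A ∪ B).card : ℝ) * d := by
          rw [Finset.card_union_of_disjoint hAB, hcard2]
      _ = (A ∪ B).card • (d:ℝ) := by rw [nsmul_eq_mul]
      _ ≤ ∑ x ∈ A ∪ B, (f x)^2 * (H.degree x : ℝ) := Finset.card_nsmul_le_sum _ _ _ h1
      _ ≤ H.qForm f := by
          rw [SimpleGraph.qForm]
          apply Finset.sum_le_sum_of_subset_of_nonneg (Finset.subset_univ _)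
          intro x _ _
          positivity
  -- energy upper bound
  have hE : H.energyForm f ≤ 4 / D := by
    rw [SimpleGraph.energyForm]
    set T : Finset (V × V) :=
      ((Finset.univ : Finset (Fin D)).image fun i => (p i.castSucc, p i.succ)) ∪
      ((Finset.univ : Finset (Fin D)).image fun i => (p i.succ, p i.castSucc)) with hTdef
    set F : V × V → ℝ := fun q => if H.Adj q.1 q.2 then (f q.1 - f q.2)^2 else 0 with hFdef
    have hstep : ∀ i : Fin D, f (p i.castSucc) - f (p i.succ) = 2 / D := by
      intro i
      rw [hf, hf, Fin.coe_castSucc, Fin.val_succ]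
      push_cast
      field_simp
      ring
    have hFzero : ∀ q ∈ Finset.univ ×ˢ Finset.univ, q ∉ T → F q = 0 := by
      rintro ⟨x, y⟩ - hq
      simp only [hFdef]
      by_cases hadj : H.Adj x y
      · rw [if_pos hadj]
        rcases hloc x y hadj with ⟨h1, h2⟩ | ⟨h1, h2⟩ | ⟨i, ⟨hxe, hye⟩ | ⟨hye, hxe⟩⟩
        · rw [hfA _ h1, hfA _ h2]; ring
        · rw [hfB _ h1, hfB _ h2]; ring
        · exact absurd (Finset.mem_union_left _ (Finset.mem_image.mpr
            ⟨i, Finset.mem_univ _, by rw [← hxe, ← hye]⟩)) hq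
        · exact absurd (Finset.mem_union_right _ (Finset.mem_image.mpr
            ⟨i, Finset.mem_univ _, by rw [← hxe, ← hye]⟩)) hq
      · rw [if_neg hadj]
    have hFbound : ∀ q ∈ T, F q ≤ 4 / (D:ℝ)^2 := by
      intro q hq
      have hle : F q ≤ (f q.1 - f q.2)^2 := by
        simp only [hFdef]
        split
        · exact le_refl _
        · positivity
      rcases Finset.mem_union.mp hq with hq | hq <;>
        rcases Finset.mem_image.mp hq with ⟨i, -, rfl⟩
      · refine hle.trans ?_
        simp only
        rw [hstep i, div_pow]
        norm_num
      · refine hle.trans ?_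
        simp only
        rw [show f (p i.succ) - f (p i.castSucc) = -(2/(D:ℝ)) by rw [← hstep i]; ring,
          neg_sq, div_pow]
        norm_num
    have hTsub : T ⊆ Finset.univ ×ˢ Finset.univ := by
      rw [Finset.univ_product_univ]; exact Finset.subset_univ T
    have hsum1 : ∑ x : V, ∑ y : V, (if H.Adj x y then (f x - f y)^2 else 0)
        = ∑ q ∈ Finset.univ ×ˢ Finset.univ, F q := by
      rw [Finset.sum_product]
    have hsum2 : ∑ q ∈ Finset.univ ×ˢ Finset.univ, F q = ∑ q ∈ T, F q :=
      (Finset.sum_subset hTsub hFzero).symm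
    have hTcard : T.card ≤ 2 * D := by
      calc T.card ≤ _ + _ := Finset.card_union_le _ _
        _ ≤ D + D := by
            apply add_le_add <;>
              exact Finset.card_image_le.trans (by simp)
        _ = 2 * D := by omega
    have hsum3 : ∑ q ∈ T, F q ≤ (2 * D : ℝ) * (4 / (D:ℝ)^2) := by
      calc ∑ q ∈ T, F q ≤ T.card • (4 / (D:ℝ)^2) := Finset.sum_le_card_nsmul _ _ _ hFbound
        _ = (T.card : ℝ) * (4 / (D:ℝ)^2) := by rw [nsmul_eq_mul]
        _ ≤ (2 * D : ℝ) * (4 / (D:ℝ)^2) := by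
            apply mul_le_mul_of_nonneg_right _ (by positivity)
            exact_mod_cast hTcard
    rw [hsum1, hsum2]
    have hfin : (1/2 : ℝ) * ((2 * D : ℝ) * (4 / (D:ℝ)^2)) = 4 / D := by
      field_simp
    calc (1/2 : ℝ) * ∑ q ∈ T, F q ≤ (1/2 : ℝ) * ((2 * D : ℝ) * (4 / (D:ℝ)^2)) := by
          linarith
      _ = 4 / D := hfin
  -- assembly
  have hmd : (0:ℝ) < ((n - D + 1 : ℕ) : ℝ) * d :=
    mul_pos (Nat.cast_pos.mpr (by omega)) (Nat.cast_pos.mpr (by omega))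
  have hQpos : 0 < H.qForm f := lt_of_lt_of_le hmd hQ
  have hE0 : 0 ≤ H.energyForm f := by
    rw [SimpleGraph.energyForm]
    apply mul_nonneg (by norm_num)
    apply Finset.sum_nonneg
    intro x _
    apply Finset.sum_nonneg
    intro y _
    split
    · positivity
    · exact le_refl _
  have hmem : H.energyForm f / H.qForm f ∈
      { r | ∃ g : V → ℝ, (∑ x : V, g x * (H.degree x : ℝ)) = 0 ∧ H.qForm g ≠ 0 ∧
        r = H.energyForm g / H.qForm g } := ⟨f, hsum0, ne_of_gt hQpos, rfl⟩
  have hbdd : BddBelow { r | ∃ g : V → ℝ, (∑ x : V, g x * (H.degree x : ℝ)) = 0 ∧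
      H.qForm g ≠ 0 ∧ r = H.energyForm g / H.qForm g } := by
    refine ⟨0, ?_⟩
    rintro r ⟨g, -, -, rfl⟩
    apply div_nonneg
    · rw [SimpleGraph.energyForm]
      apply mul_nonneg (by norm_num)
      apply Finset.sum_nonneg
      intro x _
      apply Finset.sum_nonneg
      intro y _
      split
      · positivity
      · exact le_refl _
    · rw [SimpleGraph.qForm]
      apply Finset.sum_nonneg
      intro x _
      positivity
  rw [SimpleGraph.lambda1]
  refine le_trans (csInf_le hbdd hmem) ?_
  have hDpos : (0:ℝ) < D := Nat.cast_pos.mpr (by omega)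
  have hdpos : (0:ℝ) < d := Nat.cast_pos.mpr (by omega)
  have hnDpos : (0:ℝ) < ((n - D : ℕ) : ℝ) := Nat.cast_pos.mpr (by omega)
  have hden : (0:ℝ) < (D:ℝ) * d * ((n - D : ℕ) : ℝ) := by positivity
  rw [div_le_div_iff₀ hQpos hden]
  have hE2 : H.energyForm f * D ≤ 4 := by
    rw [← le_div_iff₀ hDpos]
    exact hE
  have hcast : ((n - D + 1 : ℕ) : ℝ) = ((n - D : ℕ) : ℝ) + 1 := by push_cast; ring
  rw [hcast] at hQ
  nlinarith [mul_le_mul_of_nonneg_right hE2 (le_of_lt (mul_pos hdpos hnDpos)),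
    mul_le_mul_of_nonneg_left hQ (by norm_num : (0:ℝ) ≤ 4), hdpos.le, hnDpos.le]
end
end

section
/- With notation as above (edge e = wz deleted, f' = f + c with c = (f(z)+f(w))/(Σd(x)−2)), write R_{G−e}(f') = (a − c₁)/(b − c₂). Then c₁ = (f(w) − f(z))² > f(w)² + f(z)² and c₂ ≤ f(z)² + f(w)² + (f(z)² + f(w)²)/(Σ_x d(x) − 2), hence c₁/c₂ > 1/(1 + (Σ_x d(x) − 2)^{-1}). -/
open Finset
open scoped Classical

noncomputable section

variable {V : Type*}

/-!
Deleting the edge `wz` removes exactly the term `(f w - f z)²` from the energy, which does not see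
constant shifts. The weighted norm of the shifted function loses `(f w + c)² + (f z + c)²` with the
edge, while the shift itself adds `c² ∑ d(x)`, the cross term vanishing because `f ⟂ d`. For the
given `c` this makes `c₂ = f w² + f z² + (f w + f z)²/(∑ d(x) - 2)`, and since `f w`, `f z` have
opposite signs, `(f w + f z)² < f w² + f z² < (f w - f z)²`.
-/

namespace SimpleGraph

variable [Fintype V] (G : SimpleGraph V)

theorem two_le_sum_degree {w z : V} (hwz : G.Adj w z) : 2 ≤ ∑ x : V, (G.degree x : ℝ) := by
  have hE : 0 < #G.edgeFinset := card_pos.2 ⟨s(w, z), by simpa using hwz⟩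
  have := G.sum_degrees_eq_twice_card_edges
  exact_mod_cast (show 2 ≤ ∑ x : V, G.degree x by omega)

theorem sum_adj_sub_sum_deleteEdges_adj {w z : V} (hwz : G.Adj w z) (g : V → V → ℝ) :
    (∑ x : V, ∑ y : V, if G.Adj x y then g x y else 0) -
      (∑ x : V, ∑ y : V, if (G.deleteEdges {s(w, z)}).Adj x y then g x y else 0) =
      g w z + g z w := by
  have hsplit : ∀ x y, (if G.Adj x y then g x y else 0) =
      (if (G.deleteEdges {s(w, z)}).Adj x y then g x y else 0) +
        (if x = w ∧ y = z then g x y else 0) + (if x = z ∧ y = w then g x y else 0) := by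
    intro x y
    have := hwz.ne
    simp only [deleteEdges_adj, Set.mem_singleton_iff, Sym2.eq_iff]
    split_ifs <;> grind [G.adj_symm]
  simp only [hsplit, sum_add_distrib, add_assoc, add_sub_cancel_left]
  simp [ite_and]

theorem energyForm_add_const (f : V → ℝ) (c : ℝ) :
    G.energyForm (fun x => f x + c) = G.energyForm f := by
  simp only [energyForm, add_sub_add_right_eq_sub]

theorem energyForm_sub_energyForm_deleteEdges {w z : V} (hwz : G.Adj w z) (f : V → ℝ) :
    G.energyForm f - (G.deleteEdges {s(w, z)}).energyForm f = (f w - f z) ^ 2 := by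
  trans 1 / 2 * ((f w - f z) ^ 2 + (f z - f w) ^ 2)
  · rw [energyForm, energyForm, ← mul_sub]
    congr 1
    -- `convert` reconciles the `Decidable` instance of the deleted graph's adjacency.
    convert G.sum_adj_sub_sum_deleteEdges_adj hwz fun x y => (f x - f y) ^ 2
  · ring

theorem qForm_eq_sum_adj (g : V → ℝ) :
    G.qForm g = ∑ x : V, ∑ y : V, if G.Adj x y then g x ^ 2 else 0 := by
  simp [qForm, degree, neighborFinset_eq_filter, sum_ite, mul_comm]

theorem qForm_sub_qForm_deleteEdges {w z : V} (hwz : G.Adj w z) (g : V → ℝ) :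
    G.qForm g - (G.deleteEdges {s(w, z)}).qForm g = g w ^ 2 + g z ^ 2 := by
  rw [qForm_eq_sum_adj, qForm_eq_sum_adj]
  convert G.sum_adj_sub_sum_deleteEdges_adj hwz fun x _ => g x ^ 2

theorem qForm_add_const (f : V → ℝ) (c : ℝ) :
    G.qForm (fun x => f x + c) =
      G.qForm f + 2 * c * ∑ x : V, f x * G.degree x + c ^ 2 * ∑ x : V, (G.degree x : ℝ) := by
  simp only [qForm, mul_sum, ← sum_add_distrib]
  exact sum_congr rfl fun x _ => by ring

end SimpleGraph

-- At `D = 2` both sides degenerate consistently, since then `c = 0` and `x / 0 = 0`.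
theorem add_sq_add_add_sq_sub_sq_mul {a b c D : ℝ} (hc : c = (a + b) / (D - 2)) :
    (a + c) ^ 2 + (b + c) ^ 2 - c ^ 2 * D = a ^ 2 + b ^ 2 + (a + b) ^ 2 / (D - 2) := by
  subst hc
  rcases eq_or_ne (D - 2) 0 with h | h
  · simp [h]
  · field_simp
    ring

theorem one_div_one_add_lt_div {q ε a b : ℝ} (hq : 0 < q) (hqa : q < a) (hb : 0 < b)
    (hbq : b ≤ q * (1 + ε)) : 1 / (1 + ε) < a / b := by
  have hε : 0 < 1 + ε := pos_of_mul_pos_right (hb.trans_le hbq) hq.le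
  rw [div_lt_div_iff₀ hε hb]
  nlinarith

theorem rayleigh_decrement_bounds_general [Fintype V] (G : SimpleGraph V)
    (f : V → ℝ) (hf : (∑ x : V, f x * (G.degree x : ℝ)) = 0)
    (w z : V) (hwz : G.Adj w z) (hprod : f w * f z < 0)
    (c c₁ c₂ : ℝ)
    (hc : c = (f z + f w) / ((∑ x : V, (G.degree x : ℝ)) - 2))
    (hc1 : c₁ = G.energyForm f - (G.deleteEdges {s(w, z)}).energyForm (fun x => f x + c))
    (hc2 : c₂ = G.qForm f - (G.deleteEdges {s(w, z)}).qForm (fun x => f x + c)) :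
    c₁ = (f w - f z)^2 ∧ c₁ > (f w)^2 + (f z)^2 ∧
    c₂ ≤ (f z)^2 + (f w)^2 + ((f z)^2 + (f w)^2) / ((∑ x : V, (G.degree x : ℝ)) - 2) ∧
    c₁ / c₂ > 1 / (1 + ((∑ x : V, (G.degree x : ℝ)) - 2)⁻¹) := by
  set D := ∑ x : V, (G.degree x : ℝ)
  have hD : 0 ≤ D - 2 := sub_nonneg.2 (G.two_le_sum_degree hwz)
  have hq : 0 < f z ^ 2 + f w ^ 2 := by nlinarith [sq_nonneg (f z + f w)]
  have hc1' : c₁ = (f w - f z) ^ 2 := by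
    rw [hc1, SimpleGraph.energyForm_add_const, G.energyForm_sub_energyForm_deleteEdges hwz]
  have hc2' : c₂ = f z ^ 2 + f w ^ 2 + (f z + f w) ^ 2 / (D - 2) := by
    have hdel := G.qForm_sub_qForm_deleteEdges hwz fun x => f x + c
    rw [G.qForm_add_const, hf] at hdel
    rw [hc2]
    linarith [add_sq_add_add_sq_sub_sq_mul hc]
  have hc2_le : c₂ ≤ f z ^ 2 + f w ^ 2 + (f z ^ 2 + f w ^ 2) / (D - 2) := by
    rw [hc2']
    gcongr
    nlinarith
  refine ⟨hc1', by nlinarith, hc2_le, ?_⟩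
  refine one_div_one_add_lt_div hq (by nlinarith) (by rw [hc2']; positivity) ?_
  rwa [mul_add, mul_one, ← div_eq_mul_inv]

/-- Writing `R_{G-e}(f') = (a - c₁)/(b - c₂)` for the deleted edge `e = wz` and the shifted
function `f' = f + c`, we have `c₁ = (f w - f z)² > f w² + f z²`,
`c₂ ≤ f z² + f w² + (f z² + f w²)/(∑ d(x) - 2)`, and hence
`c₁/c₂ > 1/(1 + (∑ d(x) - 2)⁻¹)`. -/
theorem rayleigh_decrement_bounds [Fintype V] (G : SimpleGraph V) (hG : G.Connected)
    (f : V → ℝ) (hf : (∑ x : V, f x * (G.degree x : ℝ)) = 0)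
    (w z : V) (hwz : G.Adj w z) (hprod : f w * f z < 0)
    (hconn : (G.deleteEdges {s(w, z)}).Connected)
    (c c₁ c₂ : ℝ)
    (hc : c = (f z + f w) / ((∑ x : V, (G.degree x : ℝ)) - 2))
    (hc1 : c₁ = G.energyForm f - (G.deleteEdges {s(w, z)}).energyForm (fun x => f x + c))
    (hc2 : c₂ = G.qForm f - (G.deleteEdges {s(w, z)}).qForm (fun x => f x + c)) :
    c₁ = (f w - f z)^2 ∧ c₁ > (f w)^2 + (f z)^2 ∧
    c₂ ≤ (f z)^2 + (f w)^2 + ((f z)^2 + (f w)^2) / ((∑ x : V, (G.degree x : ℝ)) - 2) ∧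
    c₁ / c₂ > 1 / (1 + ((∑ x : V, (G.degree x : ℝ)) - 2)⁻¹) :=
  rayleigh_decrement_bounds_general G f hf w z hwz hprod c c₁ c₂ hc hc1 hc2
end
end
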